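/- Define, for each integer N ≥ 1, F_det(N) = 2^{−(N+3)}·Σ_{k=0}^{N} C(N,k)·( (N−2k−1)/√(k+1) + (N−2k+1)/√(N−k+1) )², p(N) = 1 − (N+2)/2^{N+1}, and F(N) = F_det(N)/p(N). Then there exists a constant C > 0 such that for every integer N ≥ 1, |1 − F(N)| ≤ C/N. -/

import Mathlib

open Finset

/-- Entanglement fidelity of non-optimal deterministic qubit PBT with `N`
ports and square-root measurements:
`F_det(N) = 2^{−(N+3)}·Σ_{k=0}^{N} C(N,k)·((N−2k−1)/√(k+1) + (N−2k+1)/√(N−k+1))²`. -/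
noncomputable def Fdet (N : ℕ) : ℝ :=
  (2 : ℝ) ^ (-((N : ℝ) + 3)) *
    ∑ k ∈ Finset.range (N + 1),
      (N.choose k : ℝ) *
        (((N : ℝ) - 2 * k - 1) / Real.sqrt ((k : ℝ) + 1) +
          ((N : ℝ) - 2 * k + 1) / Real.sqrt ((N : ℝ) - (k : ℝ) + 1)) ^ 2

/-- Success probability of qubit minimal PBT with `N` ports:
`p(N) = 1 − (N+2)/2^{N+1}`. -/
noncomputable def psucc (N : ℕ) : ℝ := 1 - ((N : ℝ) + 2) / 2 ^ (N + 1)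

/-- Conditional entanglement fidelity of qubit minimal PBT. -/
noncomputable def Fmin (N : ℕ) : ℝ := Fdet N / psucc N

/-!
Write `n = N + 2`, `j = k + 1`, `d = n - 2j` and `s = 2√(j(n-j)) = √(n² - d²)`. Since
`C(N,k)(N+1)(N+2) = C(n,j) j (n-j)`, the `k`-th summand of `F_det(N)` is `C(n,j) w / ((n-1)n)`
with `w = ((d-1)√(n-j) + (d+1)√j)² = n + (n-2)d² + (d²-1)s`.
As `d` is an integer, either `d = 0` (and then `s = n`) or `d² ≥ 1`; in both cases
`(d²-1)(n-s) ≥ 0`. Since `2(n-1)d² - w = (d²-1)(n-s)` and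
`n w - ((2n²-2n+1)d² - d⁴) = s(d²-1)(n-s)`, this bounds `w` on both sides. Summing against the
binomial moments `Σ C(n,j) d² = n 2ⁿ` and `Σ C(n,j) d⁴ = (3n²-2n) 2ⁿ`, restricted to `0 < j < n`,
yields `F_det ≤ p` and `p - F_det ≤ 3/(2n)`. Finally `p ≥ 1/4` for `N ≥ 1`, so
`0 ≤ 1 - F ≤ 6/N`.
-/

theorem sum_range_choose_succ_mul {R : Type*} [Semiring R] (m : ℕ) (f : ℕ → R) :
    ∑ k ∈ range (m + 2), ((m + 1).choose k : R) * f k =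
      ∑ k ∈ range (m + 1), (m.choose k : R) * (f k + f (k + 1)) := by
  have hlow := sum_range_succ' (fun k => (m.choose k : R) * f k) (m + 1)
  rw [sum_range_succ, Nat.choose_succ_self, Nat.cast_zero, zero_mul, add_zero] at hlow
  simp only [sum_range_succ' _ (m + 1), Nat.choose_succ_succ, Nat.cast_add, add_mul, mul_add,
    sum_add_distrib, hlow, Nat.choose_zero_right]
  abel

theorem sum_range_choose_mul_sub_two_mul_sq {R : Type*} [CommRing R] (n : ℕ) :
    ∑ j ∈ range (n + 1), (n.choose j : R) * ((n : R) - 2 * j) ^ 2 = (n : R) * 2 ^ n := by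
  induction n with
  | zero => simp
  | succ m ih =>
    rw [sum_range_choose_succ_mul]
    have key : ∀ k ∈ range (m + 1), (m.choose k : R) *
        ((((m + 1 : ℕ) : R) - 2 * k) ^ 2 + (((m + 1 : ℕ) : R) - 2 * (k + 1 : ℕ)) ^ 2) =
        2 * ((m.choose k : R) * ((m : R) - 2 * k) ^ 2) + 2 * (m.choose k : R) := by
      intro k _; push_cast; ring
    rw [sum_congr rfl key, sum_add_distrib, ← mul_sum, ← mul_sum, ih, ← Nat.cast_sum,
      Nat.sum_range_choose]
    push_cast; ring

theorem sum_range_choose_mul_sub_two_mul_pow_four {R : Type*} [CommRing R] (n : ℕ) :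
    ∑ j ∈ range (n + 1), (n.choose j : R) * ((n : R) - 2 * j) ^ 4 =
      (3 * (n : R) ^ 2 - 2 * n) * 2 ^ n := by
  induction n with
  | zero => simp
  | succ m ih =>
    rw [sum_range_choose_succ_mul]
    have key : ∀ k ∈ range (m + 1), (m.choose k : R) *
        ((((m + 1 : ℕ) : R) - 2 * k) ^ 4 + (((m + 1 : ℕ) : R) - 2 * (k + 1 : ℕ)) ^ 4) =
        2 * ((m.choose k : R) * ((m : R) - 2 * k) ^ 4) +
          12 * ((m.choose k : R) * ((m : R) - 2 * k) ^ 2) + 2 * (m.choose k : R) := by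
      intro k _; push_cast; ring
    rw [sum_congr rfl key, sum_add_distrib, sum_add_distrib, ← mul_sum, ← mul_sum, ← mul_sum,
      ih, sum_range_choose_mul_sub_two_mul_sq, ← Nat.cast_sum, Nat.sum_range_choose]
    push_cast; ring

theorem sum_range_choose_mul_eq_ends_add_interior {R : Type*} [Semiring R] (m : ℕ)
    (f : ℕ → R) :
    ∑ j ∈ range (m + 2), ((m + 1).choose j : R) * f j =
      f 0 + ∑ k ∈ range m, ((m + 1).choose (k + 1) : R) * f (k + 1) + f (m + 1) := by
  rw [sum_range_succ, sum_range_succ']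
  simp only [Nat.choose_self, Nat.choose_zero_right, Nat.cast_one, one_mul]
  abel

theorem sum_interior_choose_mul_sub_two_mul_sq {R : Type*} [CommRing R] (m : ℕ) :
    ∑ k ∈ range m,
        ((m + 1).choose (k + 1) : R) * (((m + 1 : ℕ) : R) - 2 * (k + 1 : ℕ)) ^ 2 =
      ((m + 1 : ℕ) : R) * 2 ^ (m + 1) - 2 * ((m + 1 : ℕ) : R) ^ 2 := by
  have h := sum_range_choose_mul_sub_two_mul_sq (R := R) (m + 1)
  rw [sum_range_choose_mul_eq_ends_add_interior m (fun j => (((m + 1 : ℕ) : R) - 2 * j) ^ 2)] at h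
  linear_combination h

theorem sum_interior_choose_mul_sub_two_mul_pow_four {R : Type*} [CommRing R] (m : ℕ) :
    ∑ k ∈ range m,
        ((m + 1).choose (k + 1) : R) * (((m + 1 : ℕ) : R) - 2 * (k + 1 : ℕ)) ^ 4 =
      (3 * ((m + 1 : ℕ) : R) ^ 2 - 2 * ((m + 1 : ℕ) : R)) * 2 ^ (m + 1) -
        2 * ((m + 1 : ℕ) : R) ^ 4 := by
  have h := sum_range_choose_mul_sub_two_mul_pow_four (R := R) (m + 1)
  rw [sum_range_choose_mul_eq_ends_add_interior m (fun j => (((m + 1 : ℕ) : R) - 2 * j) ^ 4)] at h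
  linear_combination h

theorem sq_sub_one_mul_sub_nonneg {n s d : ℝ} (hn : 0 ≤ n) (hs : 0 ≤ s)
    (hsd : s ^ 2 + d ^ 2 = n ^ 2) (hd : d = 0 ∨ 1 ≤ d ^ 2) : 0 ≤ (d ^ 2 - 1) * (n - s) := by
  rcases hd with rfl | hd
  · have : s = n := by nlinarith
    simp [this]
  · have : s ≤ n := by nlinarith
    exact mul_nonneg (by linarith) (by linarith)

/-- With `n = N + 2` and `j = k + 1`, the `k`-th summand of `Fdet N` is
`C(n, j) * pbtTerm n j / ((n - 1) * n)`. -/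
noncomputable def pbtTerm (n j : ℕ) : ℝ :=
  (((n : ℝ) - 2 * j - 1) * √((n : ℝ) - j) + ((n : ℝ) - 2 * j + 1) * √(j : ℝ)) ^ 2

theorem pbtTerm_eq {n j : ℕ} (hj : j ≤ n) :
    pbtTerm n j = n + (n - 2) * ((n : ℝ) - 2 * j) ^ 2 +
      (((n : ℝ) - 2 * j) ^ 2 - 1) * (2 * √(j * ((n : ℝ) - j))) := by
  have hjn : (j : ℝ) ≤ n := by exact_mod_cast hj
  have h1 := Real.sq_sqrt (sub_nonneg.2 hjn)
  have h2 := Real.sq_sqrt (Nat.cast_nonneg (α := ℝ) j)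
  rw [pbtTerm, Real.sqrt_mul (Nat.cast_nonneg _)]
  linear_combination ((n : ℝ) - 2 * j - 1) ^ 2 * h1 + ((n : ℝ) - 2 * j + 1) ^ 2 * h2

theorem sq_two_sqrt_mul_sub {n j : ℕ} (hj : j ≤ n) :
    (2 * √(j * ((n : ℝ) - j))) ^ 2 = (n : ℝ) ^ 2 - ((n : ℝ) - 2 * j) ^ 2 := by
  have hjn : (j : ℝ) ≤ n := by exact_mod_cast hj
  rw [mul_pow, Real.sq_sqrt (mul_nonneg (Nat.cast_nonneg _) (sub_nonneg.2 hjn))]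
  ring

theorem sq_sub_one_mul_sub_two_sqrt_nonneg {n j : ℕ} (hj : j ≤ n) :
    0 ≤ (((n : ℝ) - 2 * j) ^ 2 - 1) * (n - 2 * √(j * ((n : ℝ) - j))) := by
  refine sq_sub_one_mul_sub_nonneg (Nat.cast_nonneg _) (by positivity)
    (by rw [sq_two_sqrt_mul_sub hj]; ring) ?_
  have hz : (n : ℝ) - 2 * j = (((n : ℤ) - 2 * (j : ℤ) : ℤ) : ℝ) := by push_cast; ring
  rw [hz]
  rcases eq_or_ne ((n : ℤ) - 2 * (j : ℤ)) 0 with h | h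
  · exact .inl (mod_cast h)
  · have h1 : (1 : ℤ) ≤ ((n : ℤ) - 2 * (j : ℤ)) ^ 2 :=
      (one_le_sq_iff_one_le_abs _).mpr (Int.one_le_abs h)
    exact .inr (mod_cast h1)

theorem pbtTerm_le {n j : ℕ} (hj : j ≤ n) :
    pbtTerm n j ≤ 2 * (n - 1) * ((n : ℝ) - 2 * j) ^ 2 := by
  rw [pbtTerm_eq hj]
  linear_combination sq_sub_one_mul_sub_two_sqrt_nonneg hj

theorem pbtTerm_ge {n j : ℕ} (hj : j ≤ n) :
    (2 * (n : ℝ) ^ 2 - 2 * n + 1) * ((n : ℝ) - 2 * j) ^ 2 - ((n : ℝ) - 2 * j) ^ 4 ≤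
      n * pbtTerm n j := by
  have hs : 0 ≤ 2 * √(j * ((n : ℝ) - j)) := by positivity
  rw [pbtTerm_eq hj]
  nlinarith [mul_nonneg hs (sq_sub_one_mul_sub_two_sqrt_nonneg hj), sq_two_sqrt_mul_sub hj]

theorem choose_mul_succ_mul_succ_succ {N k : ℕ} (hk : k ≤ N) :
    (N.choose k : ℝ) * ((N + 1) * (N + 2)) =
      ((N + 2).choose (k + 1) : ℝ) * ((k + 1) * (N - k + 1)) := by
  have h1 : (N.choose k : ℝ) * (N + 1) = ((N + 1).choose k : ℝ) * (N - k + 1) := by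
    have := Nat.choose_mul_succ_eq N k
    rw [show N + 1 - k = N - k + 1 by omega] at this
    exact_mod_cast this
  have h2 : ((N + 2 : ℕ) : ℝ) * ((N + 1).choose k : ℝ) =
      ((N + 2).choose (k + 1) : ℝ) * (k + 1) := by
    exact_mod_cast Nat.add_one_mul_choose_eq (N + 1) k
  push_cast at h2
  linear_combination (N + 2 : ℝ) * h1 + (N - k + 1 : ℝ) * h2

theorem div_sqrt_add_div_sqrt_sq {x y : ℝ} (hx : 0 < x) (hy : 0 < y) (u v : ℝ) :
    (u / √x + v / √y) ^ 2 = (u * √y + v * √x) ^ 2 / (x * y) := by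
  rw [div_add_div _ _ (Real.sqrt_pos.2 hx).ne' (Real.sqrt_pos.2 hy).ne', div_pow, mul_pow,
    Real.sq_sqrt hx.le, Real.sq_sqrt hy.le]
  ring

theorem Fdet_summand_eq {N k : ℕ} (hk : k ≤ N) :
    (N.choose k : ℝ) * (((N : ℝ) - 2 * k - 1) / √((k : ℝ) + 1) +
        ((N : ℝ) - 2 * k + 1) / √((N : ℝ) - k + 1)) ^ 2 =
      ((N + 2).choose (k + 1) : ℝ) * pbtTerm (N + 2) (k + 1) / ((N + 1) * (N + 2)) := by
  have hkN : (k : ℝ) ≤ N := by exact_mod_cast hk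
  have hx : (0 : ℝ) < k + 1 := by positivity
  have hy : (0 : ℝ) < N - k + 1 := by linarith
  have hterm : pbtTerm (N + 2) (k + 1) =
      (((N : ℝ) - 2 * k - 1) * √((N : ℝ) - k + 1) +
        ((N : ℝ) - 2 * k + 1) * √((k : ℝ) + 1)) ^ 2 := by
    rw [pbtTerm]; push_cast; ring_nf
  rw [div_sqrt_add_div_sqrt_sq hx hy, hterm]
  field_simp
  linear_combination (((N : ℝ) - 2 * k - 1) * √((N : ℝ) - k + 1) +
    ((N : ℝ) - 2 * k + 1) * √((k : ℝ) + 1)) ^ 2 * choose_mul_succ_mul_succ_succ hk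

theorem Fdet_eq_sum_pbtTerm (N : ℕ) :
    Fdet N = (∑ k ∈ range (N + 1), ((N + 2).choose (k + 1) : ℝ) * pbtTerm (N + 2) (k + 1)) /
      (2 ^ (N + 3) * ((N + 1) * (N + 2))) := by
  have hpow : (2 : ℝ) ^ (-((N : ℝ) + 3)) = (2 ^ (N + 3))⁻¹ := by
    rw [Real.rpow_neg zero_le_two, ← Real.rpow_natCast]; push_cast; rfl
  rw [Fdet, hpow, sum_congr rfl fun k hk => Fdet_summand_eq (Nat.lt_succ_iff.1 (mem_range.1 hk)),
    ← sum_div]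
  field_simp

theorem sum_interior_pbtTerm_le (m : ℕ) :
    ∑ k ∈ range m, ((m + 1).choose (k + 1) : ℝ) * pbtTerm (m + 1) (k + 1) ≤
      2 * m * (((m + 1 : ℕ) : ℝ) * 2 ^ (m + 1) - 2 * ((m + 1 : ℕ) : ℝ) ^ 2) := by
  calc ∑ k ∈ range m, ((m + 1).choose (k + 1) : ℝ) * pbtTerm (m + 1) (k + 1)
      ≤ ∑ k ∈ range m, ((m + 1).choose (k + 1) : ℝ) *
          (2 * (((m + 1 : ℕ) : ℝ) - 1) * (((m + 1 : ℕ) : ℝ) - 2 * (k + 1 : ℕ)) ^ 2) := by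
        gcongr with k hk
        exact pbtTerm_le (by simp at hk; omega)
    _ = 2 * m * (((m + 1 : ℕ) : ℝ) * 2 ^ (m + 1) - 2 * ((m + 1 : ℕ) : ℝ) ^ 2) := by
        rw [← sum_interior_choose_mul_sub_two_mul_sq, mul_sum]
        refine sum_congr rfl fun k _ => ?_
        push_cast; ring

theorem sum_interior_pbtTerm_ge (m : ℕ) :
    2 ^ (m + 1) * m * (2 * m - 1) - 2 * ((m : ℝ) + 1) * m ^ 2 ≤
      ∑ k ∈ range m, ((m + 1).choose (k + 1) : ℝ) * pbtTerm (m + 1) (k + 1) := by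
  have h : (2 * ((m + 1 : ℕ) : ℝ) ^ 2 - 2 * ((m + 1 : ℕ) : ℝ) + 1) *
        (((m + 1 : ℕ) : ℝ) * 2 ^ (m + 1) - 2 * ((m + 1 : ℕ) : ℝ) ^ 2) -
      ((3 * ((m + 1 : ℕ) : ℝ) ^ 2 - 2 * ((m + 1 : ℕ) : ℝ)) * 2 ^ (m + 1) -
        2 * ((m + 1 : ℕ) : ℝ) ^ 4) ≤
      ((m + 1 : ℕ) : ℝ) *
        ∑ k ∈ range m, ((m + 1).choose (k + 1) : ℝ) * pbtTerm (m + 1) (k + 1) := by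
    rw [← sum_interior_choose_mul_sub_two_mul_sq, ← sum_interior_choose_mul_sub_two_mul_pow_four,
      mul_sum, mul_sum, ← sum_sub_distrib]
    gcongr with k hk
    have := pbtTerm_ge (n := m + 1) (j := k + 1) (by simp at hk; omega)
    nlinarith [(Nat.cast_nonneg ((m + 1).choose (k + 1)) : (0 : ℝ) ≤ _)]
  refine le_of_mul_le_mul_left (h.trans_eq' ?_) (Nat.cast_pos.2 m.succ_pos)
  push_cast
  ring

theorem Fdet_le_psucc (N : ℕ) : Fdet N ≤ psucc N := by
  have h := sum_interior_pbtTerm_le (N + 1)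
  rw [Fdet_eq_sum_pbtTerm, psucc, div_le_iff₀ (by positivity)]
  refine h.trans_eq ?_
  push_cast
  field_simp
  ring

theorem psucc_sub_Fdet_le (N : ℕ) : psucc N - Fdet N ≤ 3 / (2 * (N + 2)) := by
  have h := sum_interior_pbtTerm_ge (N + 1)
  rw [show N + 1 + 1 = N + 2 from rfl] at h
  rw [Fdet_eq_sum_pbtTerm, psucc]
  generalize ∑ k ∈ range (N + 1), ((N + 2).choose (k + 1) : ℝ) * pbtTerm (N + 2) (k + 1) = S
    at h ⊢
  push_cast at h
  simp only [pow_add] at h ⊢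
  have hN : (0 : ℝ) ≤ N := N.cast_nonneg
  have ht : (0 : ℝ) < 2 ^ N := by positivity
  generalize (2 : ℝ) ^ N = t at h ht ⊢
  field_simp
  nlinarith [h, mul_pos ht (by positivity : (0 : ℝ) < (N + 1) * (N + 2) * (N + 3))]

theorem one_quarter_le_psucc {N : ℕ} (hN : 1 ≤ N) : 1 / 4 ≤ psucc N := by
  have hN' : (1 : ℝ) ≤ N := by exact_mod_cast hN
  have hpow : (N : ℝ) + 1 ≤ 2 ^ N := by exact_mod_cast Nat.lt_two_pow_self
  rw [psucc, pow_succ, le_sub_comm, div_le_iff₀ (by positivity)]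
  linarith

/-- Minimal PBT teleports an unknown qubit with fidelity `1 − O(1/N)`:
there is a constant `C > 0` with `|1 − F(N)| ≤ C/N` for all `N ≥ 1`. -/
theorem Fmin_one_minus_O_inv_N :
    ∃ C : ℝ, 0 < C ∧ ∀ N : ℕ, 1 ≤ N → |1 - Fmin N| ≤ C / N := by
  refine ⟨6, by norm_num, fun N hN => ?_⟩
  have hp := one_quarter_le_psucc hN
  have hle := Fdet_le_psucc N
  have hgap := psucc_sub_Fdet_le N
  have hN' : (1 : ℝ) ≤ N := by exact_mod_cast hN
  have h1 : 1 - Fmin N = (psucc N - Fdet N) / psucc N := by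
    rw [Fmin]; field_simp
  rw [h1, abs_of_nonneg (div_nonneg (by linarith) (by linarith)),
    div_le_div_iff₀ (by linarith) (by linarith)]
  calc (psucc N - Fdet N) * N ≤ 3 / (2 * (N + 2)) * N := by gcongr
    _ ≤ 3 / 2 := by
      rw [div_mul_eq_mul_div, div_le_div_iff₀ (by positivity) (by norm_num)]; linarith
    _ ≤ 6 * psucc N := by linarith
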